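/- arXiv:2411.10359 — 3 statements merged into one kernel-verified Lean document; each statement's English description precedes it below -/
import Mathlib

section
/- Let N, m ≥ 1, let P ∈ ℝ^{N×N} be symmetric positive definite, let X ∈ ℝ^{N×N} be symmetric, let K ∈ ℝ^{m×N}, and let τ, c_x, c_u > 0 be real numbers. Then the symmetric block matrix [[X + τ·P⁻², I_N, Kᵀ], [I_N, −(τ/(2c_x²))·I_N, 0], [K, 0, −(τ/(2c_u²))·I_m]] (of size 2N+m) is negative semidefinite if and only if the symmetric block matrix [[X + (2c_x²/τ)·I_N + (2c_u²/τ)·Kᵀ·K, P⁻¹], [P⁻¹, −(1/τ)·I_N]] (of size 2N) is negative semidefinite. -/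
/-!
Both conditions are equivalent to `X + τ P⁻² + (2c_x²/τ) I + (2c_u²/τ) KᵀK ⪯ 0`. After negation,
the Schur complement criterion for positive semidefiniteness eliminates a diagonal block `-a • 1`
(with `a > 0`) at the cost of the term `a⁻¹ • B Bᵀ`, where `B` is the off-diagonal block: once for
the `2N × 2N` matrix and twice for the three-block one.
-/

open Matrix

/-- A real matrix is negative semidefinite if it is symmetric (Hermitian) and its
quadratic form is nonpositive. -/
def NegSemidef {k : Type*} [Fintype k] (M : Matrix k k ℝ) : Prop :=
  M.IsHermitian ∧ ∀ v : k → ℝ, v ⬝ᵥ M.mulVec v ≤ 0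

/-- A symmetric 3×3 block matrix with block sizes `α`, `β`, `γ`. -/
def blk3 {α β γ : Type*} (A11 : Matrix α α ℝ) (A12 : Matrix α β ℝ) (A13 : Matrix α γ ℝ)
    (A21 : Matrix β α ℝ) (A22 : Matrix β β ℝ) (A23 : Matrix β γ ℝ)
    (A31 : Matrix γ α ℝ) (A32 : Matrix γ β ℝ) (A33 : Matrix γ γ ℝ) :
    Matrix ((α ⊕ β) ⊕ γ) ((α ⊕ β) ⊕ γ) ℝ :=
  Matrix.fromBlocks (Matrix.fromBlocks A11 A12 A21 A22) (Matrix.fromRows A13 A23)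
    (Matrix.fromCols A31 A32) A33

theorem negSemidef_iff_posSemidef_neg {k : Type*} [Fintype k] {M : Matrix k k ℝ} :
    NegSemidef M ↔ (-M).PosSemidef := by
  simp [posSemidef_iff_dotProduct_mulVec, NegSemidef, neg_mulVec]

theorem negSemidef_fromBlocks_iff {m n : Type*} [Fintype m] [Fintype n] [DecidableEq n]
    (A : Matrix m m ℝ) (B : Matrix m n ℝ) {a : ℝ} (ha : 0 < a) :
    NegSemidef (fromBlocks A B Bᵀ (-a • 1)) ↔ NegSemidef (A + a⁻¹ • (B * Bᵀ)) := by
  have hD : (a • 1 : Matrix n n ℝ).PosDef := PosDef.one.smul ha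
  let : Invertible (a • 1 : Matrix n n ℝ) := invertibleOfIsUnitDet _ (by simp [ha.ne'])
  have hinv : (a • 1 : Matrix n n ℝ)⁻¹ = a⁻¹ • 1 :=
    inv_eq_left_inv (by simp [smul_smul, ha.ne'])
  rw [negSemidef_iff_posSemidef_neg, negSemidef_iff_posSemidef_neg, fromBlocks_neg, neg_smul,
    neg_neg, ← conjTranspose_eq_transpose_of_trivial, ← conjTranspose_neg,
    PosDef.fromBlocks₂₂ _ _ hD, hinv, conjTranspose_neg, conjTranspose_eq_transpose_of_trivial,
    Matrix.mul_smul, Matrix.mul_one, Matrix.smul_mul, Matrix.neg_mul, Matrix.mul_neg, neg_neg,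
    neg_add, sub_eq_add_neg]

theorem negSemidef_blk3_iff {l m n : Type*} [Fintype l] [Fintype m] [Fintype n]
    [DecidableEq m] [DecidableEq n]
    (A : Matrix l l ℝ) (B : Matrix l m ℝ) (C : Matrix l n ℝ) {a b : ℝ} (ha : 0 < a) (hb : 0 < b) :
    NegSemidef (blk3 A B C Bᵀ (-a • 1) 0 Cᵀ 0 (-b • 1)) ↔
      NegSemidef (A + a⁻¹ • (B * Bᵀ) + b⁻¹ • (C * Cᵀ)) := by
  have hrows : (fromRows C (0 : Matrix m n ℝ))ᵀ = fromCols Cᵀ 0 := by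
    rw [transpose_fromRows, transpose_zero]
  rw [blk3, ← hrows, negSemidef_fromBlocks_iff _ _ hb, transpose_fromRows, transpose_zero,
    fromRows_mul_fromCols, fromBlocks_smul, fromBlocks_add]
  simp only [Matrix.mul_zero, Matrix.zero_mul, smul_zero, add_zero]
  rw [negSemidef_fromBlocks_iff _ _ ha]
  abel_nf

theorem stmt3_general (N m : ℕ)
    (P : Matrix (Fin N) (Fin N) ℝ) (hP : P.PosDef)
    (X : Matrix (Fin N) (Fin N) ℝ)
    (K : Matrix (Fin m) (Fin N) ℝ)
    (τ cx cu : ℝ) (hτ : 0 < τ) (hcx : 0 < cx) (hcu : 0 < cu) :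
    NegSemidef (blk3
      (X + τ • (P⁻¹ * P⁻¹)) 1 Kᵀ
      1 ((-(τ / (2 * cx ^ 2))) • (1 : Matrix (Fin N) (Fin N) ℝ)) 0
      K 0 ((-(τ / (2 * cu ^ 2))) • (1 : Matrix (Fin m) (Fin m) ℝ))) ↔
    NegSemidef (Matrix.fromBlocks
      (X + (2 * cx ^ 2 / τ) • (1 : Matrix (Fin N) (Fin N) ℝ) + (2 * cu ^ 2 / τ) • (Kᵀ * K))
      P⁻¹ P⁻¹ ((-(1 / τ)) • (1 : Matrix (Fin N) (Fin N) ℝ))) := by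
  have hPinv : (P⁻¹)ᵀ = P⁻¹ := hP.1.inv
  have hlhs := negSemidef_blk3_iff (X + τ • (P⁻¹ * P⁻¹)) (1 : Matrix (Fin N) (Fin N) ℝ) Kᵀ
    (a := τ / (2 * cx ^ 2)) (b := τ / (2 * cu ^ 2)) (by positivity) (by positivity)
  have hrhs := negSemidef_fromBlocks_iff
    (X + (2 * cx ^ 2 / τ) • (1 : Matrix (Fin N) (Fin N) ℝ) + (2 * cu ^ 2 / τ) • (Kᵀ * K)) P⁻¹
    (one_div_pos.mpr hτ)
  rw [transpose_one, transpose_transpose] at hlhs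
  rw [hPinv] at hrhs
  rw [hlhs, hrhs, inv_div, inv_div, one_div, inv_inv, Matrix.mul_one]
  abel_nf

theorem stmt3 (N m : ℕ) (hN : 1 ≤ N) (hm : 1 ≤ m)
    (P : Matrix (Fin N) (Fin N) ℝ) (hP : P.PosDef)
    (X : Matrix (Fin N) (Fin N) ℝ) (hX : X.IsHermitian)
    (K : Matrix (Fin m) (Fin N) ℝ)
    (τ cx cu : ℝ) (hτ : 0 < τ) (hcx : 0 < cx) (hcu : 0 < cu) :
    NegSemidef (blk3
      (X + τ • (P⁻¹ * P⁻¹)) 1 Kᵀ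
      1 ((-(τ / (2 * cx ^ 2))) • (1 : Matrix (Fin N) (Fin N) ℝ)) 0
      K 0 ((-(τ / (2 * cu ^ 2))) • (1 : Matrix (Fin m) (Fin m) ℝ))) ↔
    NegSemidef (Matrix.fromBlocks
      (X + (2 * cx ^ 2 / τ) • (1 : Matrix (Fin N) (Fin N) ℝ) + (2 * cu ^ 2 / τ) • (Kᵀ * K))
      P⁻¹ P⁻¹ ((-(1 / τ)) • (1 : Matrix (Fin N) (Fin N) ℝ))) :=
  stmt3_general N m P hP X K τ cx cu hτ hcx hcu
end

section
/- Let N, m ≥ 1, let A_K ∈ ℝ^{N×N}, K ∈ ℝ^{m×N}, let P ∈ ℝ^{N×N} be symmetric positive definite, and let ρ ≥ 0, τ > 0, c_x > 0, c_u > 0 be real numbers. Assume that the symmetric block matrix [[P⁻¹·A_K + A_Kᵀ·P⁻¹ + ρ·P⁻² + τ·P⁻², I_N, Kᵀ], [I_N, −(τ/(2c_x²))·I_N, 0], [K, 0, −(τ/(2c_u²))·I_m]] is negative semidefinite. Then for every z ∈ ℝ^N and every r ∈ ℝ^N satisfying ‖r‖² ≤ 2c_x²‖z‖² + 2c_u²‖K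 z‖², it holds that 2·zᵀP⁻¹(A_K z + r) ≤ −ρ·zᵀP⁻²z. -/
open Matrix

/-- The Euclidean norm of a vector in `ℝ^k`. -/
noncomputable def enorm' {k : ℕ} (v : Fin k → ℝ) : ℝ :=
  ‖(EuclideanSpace.equiv (Fin k) ℝ).symm v‖

/-!
With `ζ = P⁻¹ z`, testing the LMI on the vector `(z, (2c_x²/τ) z, (2c_u²/τ) K z)` eliminates
the two multiplier blocks (a Schur complement) and leaves
`2 ζᵀ A_K z + (ρ + τ) ‖ζ‖² + (2c_x² ‖z‖² + 2c_u² ‖K z‖²) / τ ≤ 0`.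
By the residual bound the last term dominates `‖r‖² / τ`, and Young's inequality
`2 ζᵀ r ≤ τ ‖ζ‖² + ‖r‖² / τ` then absorbs the residual.
-/

lemma enorm'_sq {k : ℕ} (v : Fin k → ℝ) : enorm' v ^ 2 = v ⬝ᵥ v := by
  rw [enorm', EuclideanSpace.real_norm_sq_eq]
  simp [dotProduct, sq]

section

variable {n m : Type*} [Fintype n] [Fintype m]

lemma two_mul_dotProduct_le_mul_add_div {τ : ℝ} (hτ : 0 < τ) (u r : n → ℝ) :
    2 * (u ⬝ᵥ r) ≤ τ * (u ⬝ᵥ u) + (r ⬝ᵥ r) / τ := by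
  have h := dotProduct_self_star_nonneg (τ • u - r)
  simp only [star_trivial, sub_dotProduct, dotProduct_sub, smul_dotProduct, dotProduct_smul,
    smul_eq_mul, dotProduct_comm r u] at h
  rw [← sub_nonneg, show τ * (u ⬝ᵥ u) + (r ⬝ᵥ r) / τ - 2 * (u ⬝ᵥ r)
      = (τ * (τ * (u ⬝ᵥ u)) - τ * (u ⬝ᵥ r) - (τ * (u ⬝ᵥ r) - r ⬝ᵥ r)) / τ by field_simp; ring]
  exact div_nonneg (by linarith) hτ.le

lemma dotProduct_blk3_mulVec [DecidableEq n] [DecidableEq m]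
    (M : Matrix n n ℝ) (K : Matrix m n ℝ) (a b : ℝ) (x y : n → ℝ) (w : m → ℝ) :
    Sum.elim (Sum.elim x y) w ⬝ᵥ
        blk3 M 1 Kᵀ 1 (-a • 1) 0 K 0 (-b • 1) *ᵥ Sum.elim (Sum.elim x y) w =
      x ⬝ᵥ M *ᵥ x + 2 * (x ⬝ᵥ y) + 2 * (K *ᵥ x ⬝ᵥ w) - a * (y ⬝ᵥ y) - b * (w ⬝ᵥ w) := by
  simp only [blk3, neg_smul, fromBlocks_mulVec, Sum.elim_comp_inl, Sum.elim_comp_inr, one_mulVec,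
    neg_mulVec, smul_mulVec, fromRows_mulVec, mulVec_transpose, zero_mulVec, fromCols_mulVec,
    add_zero, sumElim_dotProduct_sumElim, dotProduct_add, dotProduct_comm y x, dotProduct_neg,
    dotProduct_smul, smul_eq_mul, dotProduct_zero, dotProduct_comm w, add_dotProduct,
    neg_dotProduct, smul_dotProduct]
  rw [dotProduct_comm x (w ᵥ* K), ← dotProduct_mulVec, dotProduct_comm w]
  ring

lemma NegSemidef.dotProduct_add_inv_mul_le_zero [DecidableEq n] [DecidableEq m]
    {M : Matrix n n ℝ} {K : Matrix m n ℝ} {a b : ℝ}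
    (h : NegSemidef (blk3 M 1 Kᵀ 1 (-a • (1 : Matrix n n ℝ)) 0 K 0 (-b • (1 : Matrix m m ℝ))))
    (ha : a ≠ 0) (hb : b ≠ 0) (x : n → ℝ) :
    x ⬝ᵥ M *ᵥ x + a⁻¹ * (x ⬝ᵥ x) + b⁻¹ * (K *ᵥ x ⬝ᵥ K *ᵥ x) ≤ 0 := by
  have := h.2 (Sum.elim (Sum.elim x (a⁻¹ • x)) (b⁻¹ • K *ᵥ x))
  simp only [dotProduct_blk3_mulVec, dotProduct_smul, smul_dotProduct, smul_eq_mul,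
    mul_inv_cancel_left₀ ha, mul_inv_cancel_left₀ hb] at this
  linarith

lemma Matrix.IsSymm.dotProduct_mulVec_comm {S : Matrix n n ℝ}
    (hS : S.IsSymm) (x y : n → ℝ) : x ⬝ᵥ S *ᵥ y = S *ᵥ x ⬝ᵥ y := by
  rw [dotProduct_mulVec, ← mulVec_transpose, hS.eq]

lemma Matrix.IsSymm.dotProduct_mul_mulVec {S : Matrix n n ℝ}
    (hS : S.IsSymm) (A : Matrix n n ℝ) (x : n → ℝ) : x ⬝ᵥ (S * A) *ᵥ x = S *ᵥ x ⬝ᵥ A *ᵥ x := by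
  rw [← mulVec_mulVec, hS.dotProduct_mulVec_comm]

lemma dotProduct_transpose_mul_mulVec (A S : Matrix n n ℝ) (x : n → ℝ) :
    x ⬝ᵥ (Aᵀ * S) *ᵥ x = A *ᵥ x ⬝ᵥ S *ᵥ x := by
  rw [← mulVec_mulVec, dotProduct_mulVec, vecMul_transpose]

end

theorem stmt4_general (N m : ℕ)
    (AK : Matrix (Fin N) (Fin N) ℝ) (K : Matrix (Fin m) (Fin N) ℝ)
    (P : Matrix (Fin N) (Fin N) ℝ) (hP : P.PosDef)
    (ρ τ cx cu : ℝ) (hτ : 0 < τ) (hcx : 0 < cx) (hcu : 0 < cu)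
    (hLMI : NegSemidef (blk3
      (P⁻¹ * AK + AKᵀ * P⁻¹ + ρ • (P⁻¹ * P⁻¹) + τ • (P⁻¹ * P⁻¹)) 1 Kᵀ
      1 ((-(τ / (2 * cx ^ 2))) • (1 : Matrix (Fin N) (Fin N) ℝ)) 0
      K 0 ((-(τ / (2 * cu ^ 2))) • (1 : Matrix (Fin m) (Fin m) ℝ)))) :
    ∀ z r : Fin N → ℝ,
      enorm' r ^ 2 ≤ 2 * cx ^ 2 * enorm' z ^ 2 + 2 * cu ^ 2 * enorm' (K.mulVec z) ^ 2 →
      2 * (z ⬝ᵥ (P⁻¹).mulVec (AK.mulVec z + r)) ≤ -ρ * (z ⬝ᵥ (P⁻¹ * P⁻¹).mulVec z) := by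
  intro z r hr
  have hS : (P⁻¹).IsSymm := by
    simpa [IsSymm, IsHermitian, conjTranspose_eq_transpose_of_trivial] using hP.isHermitian.inv
  have hSchur := NegSemidef.dotProduct_add_inv_mul_le_zero hLMI (by positivity) (by positivity) z
  simp only [add_mulVec, smul_mulVec, dotProduct_add, dotProduct_smul, smul_eq_mul, inv_div,
    hS.dotProduct_mul_mulVec, dotProduct_transpose_mul_mulVec, dotProduct_comm (AK *ᵥ z)]
    at hSchur
  have hYoung := two_mul_dotProduct_le_mul_add_div hτ (P⁻¹ *ᵥ z) r
  have hres : r ⬝ᵥ r / τ ≤ 2 * cx ^ 2 / τ * (z ⬝ᵥ z) + 2 * cu ^ 2 / τ * (K *ᵥ z ⬝ᵥ K *ᵥ z) := by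
    simp only [enorm'_sq] at hr
    rw [div_mul_eq_mul_div, div_mul_eq_mul_div, ← add_div]
    exact div_le_div_of_nonneg_right hr hτ.le
  rw [hS.dotProduct_mul_mulVec, mulVec_add, dotProduct_add, hS.dotProduct_mulVec_comm z,
    hS.dotProduct_mulVec_comm z]
  linarith

theorem stmt4 (N m : ℕ) (hN : 1 ≤ N) (hm : 1 ≤ m)
    (AK : Matrix (Fin N) (Fin N) ℝ) (K : Matrix (Fin m) (Fin N) ℝ)
    (P : Matrix (Fin N) (Fin N) ℝ) (hP : P.PosDef)
    (ρ τ cx cu : ℝ) (hρ : 0 ≤ ρ) (hτ : 0 < τ) (hcx : 0 < cx) (hcu : 0 < cu)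
    (hLMI : NegSemidef (blk3
      (P⁻¹ * AK + AKᵀ * P⁻¹ + ρ • (P⁻¹ * P⁻¹) + τ • (P⁻¹ * P⁻¹)) 1 Kᵀ
      1 ((-(τ / (2 * cx ^ 2))) • (1 : Matrix (Fin N) (Fin N) ℝ)) 0
      K 0 ((-(τ / (2 * cu ^ 2))) • (1 : Matrix (Fin m) (Fin m) ℝ)))) :
    ∀ z r : Fin N → ℝ,
      enorm' r ^ 2 ≤ 2 * cx ^ 2 * enorm' z ^ 2 + 2 * cu ^ 2 * enorm' (K.mulVec z) ^ 2 →
      2 * (z ⬝ᵥ (P⁻¹).mulVec (AK.mulVec z + r)) ≤ -ρ * (z ⬝ᵥ (P⁻¹ * P⁻¹).mulVec z) :=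
  stmt4_general N m AK K P hP ρ τ cx cu hτ hcx hcu hLMI
end

section
/- Let N, m, p, q ≥ 1, let A_K ∈ ℝ^{N×N}, K ∈ ℝ^{m×N}, B_w ∈ ℝ^{N×p}, C_K ∈ ℝ^{q×N}, D_w ∈ ℝ^{q×p}, S_w ∈ ℝ^{p×q}; let P ∈ ℝ^{N×N} be symmetric positive definite, Q_w ∈ ℝ^{p×p} symmetric, R_w ∈ ℝ^{q×q} symmetric positive semidefinite, and let ρ ≥ 0, η ≥ 0, τ > 0, λ > 0, c_x > 0, c_u > 0 be real numbers. Define H_w = Q_w + S_w·D_w + D_wᵀ·S_wᵀ, and assume that the symmetric matrix M + Eᵀ·Δ·E is negative semidefinite, where M is the symmetric block matrix [[P⁻¹·A_K + A_Kᵀ·P⁻¹ + ρ·P⁻², P⁻¹, P⁻¹·B_w + (1/λ)·C_Kᵀ·S_wᵀ], [P⁻¹, −(1/τ)·I_N, 0], [B_wᵀ·P⁻¹ + (1/λ)·S_w·C_K, 0, (1/λ)·H_w + (η/λ²)·I_p]] (block sizes N, N, p), E is the block matrix [[I_N, 0, 0], [K, 0, 0], [C_K, 0, D_w]] (block row sizes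 N, m, q; block column sizes N, N, p), and Δ = blkdiag((2c_x²/τ)·I_N, (2c_u²/τ)·I_m, (1/λ)·R_w). Then for every z ∈ ℝ^N, every r ∈ ℝ^N with ‖r‖² ≤ 2c_x²‖z‖² + 2c_u²‖K z‖², and every w ∈ ℝ^p, setting y = C_K·z + D_w·w, it holds that 2·zᵀP⁻¹(A_K·z + r + B_w·w) ≤ −ρ·zᵀP⁻²z − (η/λ²)·‖w‖² − (1/λ)·(wᵀQ_w w + 2·wᵀS_w y + yᵀR_w y). -/
/-!
Evaluate the quadratic form of the negative semidefinite matrix `M + Eᵀ Δ E` at `(z, r, w)`.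
Since `E (z, r, w) = (z, K z, y)`, this gives the dissipation inequality up to the extra terms
`(1/τ) (2 c_x² ‖z‖² + 2 c_u² ‖K z‖² - ‖r‖²)`, which are nonnegative by the bound on the
residual `r` (an S-procedure with multiplier `1/τ`).
-/

open Matrix

/-- A 3×3 block matrix with block row sizes `α`, `β`, `γ` and
block column sizes `α'`, `β'`, `γ'`. -/
def blk33 {α β γ α' β' γ' : Type*}
    (A11 : Matrix α α' ℝ) (A12 : Matrix α β' ℝ) (A13 : Matrix α γ' ℝ)
    (A21 : Matrix β α' ℝ) (A22 : Matrix β β' ℝ) (A23 : Matrix β γ' ℝ)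
    (A31 : Matrix γ α' ℝ) (A32 : Matrix γ β' ℝ) (A33 : Matrix γ γ' ℝ) :
    Matrix ((α ⊕ β) ⊕ γ) ((α' ⊕ β') ⊕ γ') ℝ :=
  Matrix.fromBlocks (Matrix.fromBlocks A11 A12 A21 A22) (Matrix.fromRows A13 A23)
    (Matrix.fromCols A31 A32) A33

lemma blk33_mulVec_sumElim {α β γ α' β' γ' : Type*} [Fintype α'] [Fintype β'] [Fintype γ']
    (A11 : Matrix α α' ℝ) (A12 : Matrix α β' ℝ) (A13 : Matrix α γ' ℝ)
    (A21 : Matrix β α' ℝ) (A22 : Matrix β β' ℝ) (A23 : Matrix β γ' ℝ)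
    (A31 : Matrix γ α' ℝ) (A32 : Matrix γ β' ℝ) (A33 : Matrix γ γ' ℝ)
    (a : α' → ℝ) (b : β' → ℝ) (c : γ' → ℝ) :
    blk33 A11 A12 A13 A21 A22 A23 A31 A32 A33 *ᵥ Sum.elim (Sum.elim a b) c =
      Sum.elim (Sum.elim (A11 *ᵥ a + A12 *ᵥ b + A13 *ᵥ c) (A21 *ᵥ a + A22 *ᵥ b + A23 *ᵥ c))
        (A31 *ᵥ a + A32 *ᵥ b + A33 *ᵥ c) := by
  simp only [blk33, fromBlocks_mulVec, Sum.elim_comp_inl, Sum.elim_comp_inr, fromRows_mulVec,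
    fromCols_mulVec_sumElim, ← Sum.elim_add_add]

lemma dotProduct_transpose_mul_mul_mulVec {ι κ : Type*} [Fintype ι] [Fintype κ]
    (E : Matrix ι κ ℝ) (Δ : Matrix ι ι ℝ) (u : κ → ℝ) :
    u ⬝ᵥ (Eᵀ * Δ * E) *ᵥ u = E *ᵥ u ⬝ᵥ Δ *ᵥ (E *ᵥ u) := by
  rw [← mulVec_mulVec, ← mulVec_mulVec, dotProduct_transpose_mulVec, dotProduct_comm]

lemma dotProduct_transpose_mulVec_mulVec {ι κ ν : Type*} [Fintype ι] [Fintype κ] [Fintype ν]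
    (A : Matrix ι κ ℝ) (B : Matrix ι ν ℝ) (x : κ → ℝ) (y : ν → ℝ) :
    x ⬝ᵥ Aᵀ *ᵥ B *ᵥ y = y ⬝ᵥ Bᵀ *ᵥ A *ᵥ x := by
  rw [dotProduct_transpose_mulVec, dotProduct_transpose_mulVec, dotProduct_comm]

theorem stmt6_general (N m p q : ℕ)
    (AK : Matrix (Fin N) (Fin N) ℝ) (K : Matrix (Fin m) (Fin N) ℝ)
    (Bw : Matrix (Fin N) (Fin p) ℝ) (CK : Matrix (Fin q) (Fin N) ℝ)
    (Dw : Matrix (Fin q) (Fin p) ℝ) (Sw : Matrix (Fin p) (Fin q) ℝ)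
    (P : Matrix (Fin N) (Fin N) ℝ) (hP : P.PosDef)
    (Qw : Matrix (Fin p) (Fin p) ℝ)
    (Rw : Matrix (Fin q) (Fin q) ℝ)
    (ρ η τ lam cx cu : ℝ) (hτ : 0 < τ)
    (Hw : Matrix (Fin p) (Fin p) ℝ) (hHw : Hw = Qw + Sw * Dw + Dwᵀ * Swᵀ)
    (hLMI : NegSemidef
      ((blk33
        (P⁻¹ * AK + AKᵀ * P⁻¹ + ρ • (P⁻¹ * P⁻¹)) P⁻¹ (P⁻¹ * Bw + (1 / lam) • (CKᵀ * Swᵀ))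
        P⁻¹ ((-(1 / τ)) • (1 : Matrix (Fin N) (Fin N) ℝ)) 0
        (Bwᵀ * P⁻¹ + (1 / lam) • (Sw * CK)) 0
          ((1 / lam) • Hw + (η / lam ^ 2) • (1 : Matrix (Fin p) (Fin p) ℝ))) +
      (blk33
        (1 : Matrix (Fin N) (Fin N) ℝ) 0 0
        K 0 0
        CK 0 Dw)ᵀ *
      (blk33
        ((2 * cx ^ 2 / τ) • (1 : Matrix (Fin N) (Fin N) ℝ)) 0 0
        0 ((2 * cu ^ 2 / τ) • (1 : Matrix (Fin m) (Fin m) ℝ)) 0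
        0 0 ((1 / lam) • Rw)) *
      (blk33
        (1 : Matrix (Fin N) (Fin N) ℝ) 0 0
        K 0 0
        CK 0 Dw))) :
    ∀ (z r : Fin N → ℝ) (w : Fin p → ℝ),
      enorm' r ^ 2 ≤ 2 * cx ^ 2 * enorm' z ^ 2 + 2 * cu ^ 2 * enorm' (K.mulVec z) ^ 2 →
      ∀ y : Fin q → ℝ, y = CK.mulVec z + Dw.mulVec w →
        2 * (z ⬝ᵥ (P⁻¹).mulVec (AK.mulVec z + r + Bw.mulVec w)) ≤
          -ρ * (z ⬝ᵥ (P⁻¹ * P⁻¹).mulVec z) - (η / lam ^ 2) * enorm' w ^ 2 -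
            (1 / lam) * (w ⬝ᵥ Qw.mulVec w + 2 * (w ⬝ᵥ Sw.mulVec y) + y ⬝ᵥ Rw.mulVec y) := by
  intro z r w hres y hy
  subst hy hHw
  have hPinv : (P⁻¹)ᵀ = P⁻¹ := hP.isHermitian.inv
  have hform := hLMI.2 (Sum.elim (Sum.elim z r) w)
  simp only [add_mulVec, dotProduct_add, dotProduct_transpose_mul_mul_mulVec,
    blk33_mulVec_sumElim, sumElim_dotProduct_sumElim] at hform
  simp only [add_mulVec, smul_mulVec, one_mulVec, zero_mulVec, ← mulVec_mulVec, mulVec_add,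
    dotProduct_add, dotProduct_zero, dotProduct_smul, smul_eq_mul, add_zero, zero_add,
    neg_smul, neg_mulVec, dotProduct_neg] at hform ⊢
  have hswap : r ⬝ᵥ P⁻¹ *ᵥ z = z ⬝ᵥ P⁻¹ *ᵥ r := by rw [← dotProduct_transpose_mulVec, hPinv]
  rw [dotProduct_transpose_mulVec_mulVec AK, dotProduct_transpose_mulVec_mulVec Bw,
    dotProduct_transpose_mulVec_mulVec CK, dotProduct_transpose_mulVec_mulVec Dw, hPinv,
    transpose_transpose, hswap] at hform
  simp only [enorm'_sq] at hres ⊢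
  have hSproc : 0 ≤ 1 / τ * (2 * cx ^ 2 * (z ⬝ᵥ z) + 2 * cu ^ 2 * (K *ᵥ z ⬝ᵥ K *ᵥ z) - r ⬝ᵥ r) :=
    mul_nonneg (by positivity) (by linarith)
  linear_combination hform + hSproc

theorem stmt6 (N m p q : ℕ) (hN : 1 ≤ N) (hm : 1 ≤ m) (hp : 1 ≤ p) (hq : 1 ≤ q)
    (AK : Matrix (Fin N) (Fin N) ℝ) (K : Matrix (Fin m) (Fin N) ℝ)
    (Bw : Matrix (Fin N) (Fin p) ℝ) (CK : Matrix (Fin q) (Fin N) ℝ)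
    (Dw : Matrix (Fin q) (Fin p) ℝ) (Sw : Matrix (Fin p) (Fin q) ℝ)
    (P : Matrix (Fin N) (Fin N) ℝ) (hP : P.PosDef)
    (Qw : Matrix (Fin p) (Fin p) ℝ) (hQw : Qw.IsHermitian)
    (Rw : Matrix (Fin q) (Fin q) ℝ) (hRw : Rw.PosSemidef)
    (ρ η τ lam cx cu : ℝ) (hρ : 0 ≤ ρ) (hη : 0 ≤ η) (hτ : 0 < τ) (hlam : 0 < lam)
    (hcx : 0 < cx) (hcu : 0 < cu)
    (Hw : Matrix (Fin p) (Fin p) ℝ) (hHw : Hw = Qw + Sw * Dw + Dwᵀ * Swᵀ)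
    (hLMI : NegSemidef
      ((blk33
        (P⁻¹ * AK + AKᵀ * P⁻¹ + ρ • (P⁻¹ * P⁻¹)) P⁻¹ (P⁻¹ * Bw + (1 / lam) • (CKᵀ * Swᵀ))
        P⁻¹ ((-(1 / τ)) • (1 : Matrix (Fin N) (Fin N) ℝ)) 0
        (Bwᵀ * P⁻¹ + (1 / lam) • (Sw * CK)) 0
          ((1 / lam) • Hw + (η / lam ^ 2) • (1 : Matrix (Fin p) (Fin p) ℝ))) +
      (blk33
        (1 : Matrix (Fin N) (Fin N) ℝ) 0 0
        K 0 0
        CK 0 Dw)ᵀ *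
      (blk33
        ((2 * cx ^ 2 / τ) • (1 : Matrix (Fin N) (Fin N) ℝ)) 0 0
        0 ((2 * cu ^ 2 / τ) • (1 : Matrix (Fin m) (Fin m) ℝ)) 0
        0 0 ((1 / lam) • Rw)) *
      (blk33
        (1 : Matrix (Fin N) (Fin N) ℝ) 0 0
        K 0 0
        CK 0 Dw))) :
    ∀ (z r : Fin N → ℝ) (w : Fin p → ℝ),
      enorm' r ^ 2 ≤ 2 * cx ^ 2 * enorm' z ^ 2 + 2 * cu ^ 2 * enorm' (K.mulVec z) ^ 2 →
      ∀ y : Fin q → ℝ, y = CK.mulVec z + Dw.mulVec w →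
        2 * (z ⬝ᵥ (P⁻¹).mulVec (AK.mulVec z + r + Bw.mulVec w)) ≤
          -ρ * (z ⬝ᵥ (P⁻¹ * P⁻¹).mulVec z) - (η / lam ^ 2) * enorm' w ^ 2 -
            (1 / lam) * (w ⬝ᵥ Qw.mulVec w + 2 * (w ⬝ᵥ Sw.mulVec y) + y ⬝ᵥ Rw.mulVec y) :=
  stmt6_general N m p q AK K Bw CK Dw Sw P hP Qw Rw ρ η τ lam cx cu hτ Hw hHw hLMI
end
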